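/- Fix R ∈ {1, …, D} and suppose the single-head non-singularity assumption holds for R. If R ≥ max_{i∈{1,…,L+1}} ⌈G_i/2⌉, then there exist adapter matrices (ΔW_{Kl}, ΔW_{Ql}, ΔW_{Vl}, ΔW_{1l}) for all l ∈ {1,…,L}, together with ΔW_{2L} and ΔW_o, each of rank at most R (all other adapters set to zero), and updated bias vectors (b̂_{1l}, b̂_{2l})_{l=1}^{L}, such that for every sequence length N ≥ 1 and every input X ∈ ℝ^{D×N}, the adapted single-head Transformer network f satisfies f(X) = f̄(X). -/

import Mathlib

open Matrix Finset

noncomputable section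

/-- A singular value decomposition of a square real matrix: `W = U Σ Vᵀ` with
`U, V` orthogonal and singular values in descending order, recorded 0-indexed
(`σ 0` is the paper's `σ_1`) and extended by zero from index `D` on. -/
structure SVD {D : ℕ} (W : Matrix (Fin D) (Fin D) ℝ) where
  U : Matrix (Fin D) (Fin D) ℝ
  V : Matrix (Fin D) (Fin D) ℝ
  σ : ℕ → ℝ
  hU : Uᵀ * U = 1
  hV : Vᵀ * V = 1
  nonneg : ∀ i, 0 ≤ σ i
  anti : ∀ i j, i ≤ j → σ j ≤ σ i
  tail_zero : ∀ i, D ≤ i → σ i = 0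
  decomp : W = U * Matrix.diagonal (fun i : Fin D => σ i) * Vᵀ

/-- `s.trunc r` is the best rank-`r` approximation `α_r(W)` obtained by
truncating the singular value decomposition `s` of `W` to its `r` largest
singular values. -/
def SVD.trunc {D : ℕ} {W : Matrix (Fin D) (Fin D) ℝ} (s : SVD W) (r : ℕ) :
    Matrix (Fin D) (Fin D) ℝ :=
  s.U * Matrix.diagonal (fun i : Fin D => if (i : ℕ) < r then s.σ i else 0) * s.Vᵀ

/-- Column-wise softmax of a matrix. -/
def colSoftmax {m n : ℕ} (A : Matrix (Fin m) (Fin n) ℝ) :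
    Matrix (Fin m) (Fin n) ℝ :=
  Matrix.of fun i j => Real.exp (A i j) / ∑ k, Real.exp (A k j)

/-- Entrywise ReLU on matrices. -/
def reluMat {m n : ℕ} (A : Matrix (Fin m) (Fin n) ℝ) :
    Matrix (Fin m) (Fin n) ℝ :=
  Matrix.of fun i j => max (A i j) 0

/-- `b 1_Nᵀ` : the matrix whose every column is the bias vector `b`. -/
def biasMat {D : ℕ} (N : ℕ) (b : Fin D → ℝ) : Matrix (Fin D) (Fin N) ℝ :=
  Matrix.of fun i _ => b i

/-- The parameters of a single-head Transformer network of embedding size `D`: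
per-block (indexed `1, …, L`) attention weights `WV, WK, WQ`, feedforward
weights `W1, W2` and biases `b1, b2`, and the output-layer weight `Wo`. -/
structure TFN1Params (D : ℕ) where
  WV : ℕ → Matrix (Fin D) (Fin D) ℝ
  WK : ℕ → Matrix (Fin D) (Fin D) ℝ
  WQ : ℕ → Matrix (Fin D) (Fin D) ℝ
  W1 : ℕ → Matrix (Fin D) (Fin D) ℝ
  W2 : ℕ → Matrix (Fin D) (Fin D) ℝ
  b1 : ℕ → Fin D → ℝ
  b2 : ℕ → Fin D → ℝ
  Wo : Matrix (Fin D) (Fin D) ℝ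

/-- Single-head self-attention layer of the `l`-th transformer block:
`Attn_l(Z) = W_{Vl} Z · softmax((W_{Kl} Z)ᵀ (W_{Ql} Z))`. -/
def TFN1Params.attn {D : ℕ} (p : TFN1Params D) (l : ℕ) {N : ℕ}
    (Z : Matrix (Fin D) (Fin N) ℝ) : Matrix (Fin D) (Fin N) ℝ :=
  p.WV l * Z * colSoftmax ((p.WK l * Z)ᵀ * (p.WQ l * Z))

/-- The `l`-th transformer block:
`Z_l = W_{2l} · ReLU(W_{1l} · Attn_l(Z_{l−1}) + b_{1l} 1_Nᵀ) + b_{2l} 1_Nᵀ`. -/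
def TFN1Params.block {D : ℕ} (p : TFN1Params D) (l : ℕ) {N : ℕ}
    (Z : Matrix (Fin D) (Fin N) ℝ) : Matrix (Fin D) (Fin N) ℝ :=
  p.W2 l * reluMat (p.W1 l * p.attn l Z + biasMat N (p.b1 l)) + biasMat N (p.b2 l)

/-- Output `Z_L` of the first `L` transformer blocks (with `Z_0 = X`). -/
def TFN1Params.blocks {D : ℕ} (p : TFN1Params D) {N : ℕ} :
    ℕ → Matrix (Fin D) (Fin N) ℝ → Matrix (Fin D) (Fin N) ℝ
  | 0, X => X
  | l + 1, X => p.block (l + 1) (p.blocks l X)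

/-- The full Transformer network with `L` blocks: `X ↦ softmax(W_o Z_L)`. -/
def TFN1Params.forward {D : ℕ} (p : TFN1Params D) (L : ℕ) {N : ℕ}
    (X : Matrix (Fin D) (Fin N) ℝ) : Matrix (Fin D) (Fin N) ℝ :=
  colSoftmax (p.Wo * p.blocks L X)

/-- The key–query difference matrix entering the single-head non-singularity
assumption at block `l`. -/
def EKQ1 {D : ℕ} (pb p : TFN1Params D) (l : ℕ) : Matrix (Fin D) (Fin D) ℝ :=
  if l = 1 then (pb.WK 1)ᵀ * pb.WQ 1 - (p.WK 1)ᵀ * p.WQ 1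
  else
    ((p.W2 (l - 1))ᵀ)⁻¹ * (pb.W2 (l - 1))ᵀ * (pb.WK l)ᵀ * pb.WQ l *
        pb.W2 (l - 1) * (p.W2 (l - 1))⁻¹ -
      (p.WK l)ᵀ * p.WQ l

/-- The value/first-feedforward difference matrix entering the single-head
non-singularity assumption at block `l`. -/
def EV1 {D : ℕ} (pb p : TFN1Params D) (l : ℕ) : Matrix (Fin D) (Fin D) ℝ :=
  if l = 1 then pb.W1 1 * pb.WV 1 - p.W1 1 * p.WV 1
  else pb.W1 l * pb.WV l * pb.W2 (l - 1) * (p.W2 (l - 1))⁻¹ - p.W1 l * p.WV l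

/-- The output-layer difference matrix in the single-head non-singularity
assumption. -/
def EO1 {D : ℕ} (pb p : TFN1Params D) (L : ℕ) : Matrix (Fin D) (Fin D) ℝ :=
  pb.Wo * pb.W2 L - p.Wo * p.W2 L

/-- All weight matrices of a single-head Transformer network with `L` blocks
are non-singular. -/
def AllWeightsNS1 {D : ℕ} (L : ℕ) (q : TFN1Params D) : Prop :=
  (∀ l ∈ Finset.Icc 1 L,
    (q.WV l).det ≠ 0 ∧ (q.WK l).det ≠ 0 ∧ (q.WQ l).det ≠ 0 ∧
      (q.W1 l).det ≠ 0 ∧ (q.W2 l).det ≠ 0) ∧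
  q.Wo.det ≠ 0

/-- Rank-based functionality gap `G_i` between the target `pb` and frozen `p`
single-head Transformer networks, for `i ∈ {1, …, L}` (blocks) and `i = L + 1`
(output layer). -/
def Gap1 {D : ℕ} (L : ℕ) (pb p : TFN1Params D) (i : ℕ) : ℕ :=
  if i = L + 1 then (pb.Wo * pb.W2 L - p.Wo * p.W2 L).rank
  else if i = 1 then
    max ((pb.WK 1)ᵀ * pb.WQ 1 - (p.WK 1)ᵀ * p.WQ 1).rank
      (pb.W1 1 * pb.WV 1 - p.W1 1 * p.WV 1).rank
  else
    max ((pb.W2 (i - 1))ᵀ * (pb.WK i)ᵀ * pb.WQ i * pb.W2 (i - 1) -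
        (p.W2 (i - 1))ᵀ * (p.WK i)ᵀ * p.WQ i * p.W2 (i - 1)).rank
      (pb.W1 i * pb.WV i * pb.W2 (i - 1) - p.W1 i * p.WV i * p.W2 (i - 1)).rank

lemma svd_card_cond_le {D : ℕ} (P : Fin D → Prop) [DecidablePred P] (r : ℕ)
    (h : ∀ i, P i → (i : ℕ) < r) : Fintype.card {i : Fin D // P i} ≤ r := by
  rw [Fintype.card_subtype]
  have := Finset.card_le_card_of_injOn (s := Finset.univ.filter P) (t := Finset.range r)
    (fun i : Fin D => (i : ℕ))
    (fun a ha => by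
      simp only [Finset.mem_coe, Finset.mem_filter] at ha
      exact Finset.mem_range.mpr (h a ha.2))
    (Fin.val_injective.injOn)
  simpa using this

lemma svd_trunc_rank_le {D : ℕ} {W : Matrix (Fin D) (Fin D) ℝ} (s : SVD W) (r : ℕ) :
    (s.trunc r).rank ≤ r := by
  refine le_trans (Matrix.rank_mul_le_left _ _) ?_
  refine le_trans (Matrix.rank_mul_le_right _ _) ?_
  rw [Matrix.rank_diagonal]
  refine svd_card_cond_le _ r fun i hi => ?_
  by_contra hc
  simp [if_neg hc] at hi

lemma svd_card_support_le_rank {D : ℕ} {W : Matrix (Fin D) (Fin D) ℝ} (s : SVD W) :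
    Fintype.card {i : Fin D // s.σ i ≠ 0} ≤ W.rank := by
  have hdiag : s.Uᵀ * W * s.V = Matrix.diagonal (fun i : Fin D => s.σ i) := by
    calc s.Uᵀ * W * s.V = s.Uᵀ * (s.U * Matrix.diagonal (fun i : Fin D => s.σ i) * s.Vᵀ) * s.V := by
          rw [← s.decomp]
      _ = (s.Uᵀ * s.U) * Matrix.diagonal (fun i : Fin D => s.σ i) * (s.Vᵀ * s.V) := by
          simp only [Matrix.mul_assoc]
      _ = Matrix.diagonal (fun i : Fin D => s.σ i) := by rw [s.hU, s.hV]; simp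
  have h2 := Matrix.rank_diagonal (fun i : Fin D => s.σ i)
  rw [← hdiag] at h2
  rw [← h2]
  exact le_trans (Matrix.rank_mul_le_left _ _) (Matrix.rank_mul_le_right _ _)

lemma svd_lt_rank_of_ne_zero {D : ℕ} {W : Matrix (Fin D) (Fin D) ℝ} (s : SVD W)
    (j : Fin D) (hj : s.σ j ≠ 0) : (j : ℕ) < W.rank := by
  have h1 : (Finset.univ.filter (fun i : Fin D => (i : ℕ) ≤ (j : ℕ))).card ≤
      Fintype.card {i : Fin D // s.σ i ≠ 0} := by
    rw [Fintype.card_subtype]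
    apply Finset.card_le_card
    intro i hi
    simp only [Finset.mem_filter, Finset.mem_univ, true_and] at hi ⊢
    have hle : s.σ (j : ℕ) ≤ s.σ (i : ℕ) := s.anti _ _ hi
    have h0 := s.nonneg (j : ℕ)
    intro hz
    rw [hz] at hle
    exact hj (le_antisymm hle h0)
  have h2 : (j : ℕ) + 1 ≤ (Finset.univ.filter (fun i : Fin D => (i : ℕ) ≤ (j : ℕ))).card := by
    have := Finset.card_le_card_of_injOn
      (s := Finset.range ((j : ℕ) + 1))
      (t := Finset.univ.filter (fun i : Fin D => (i : ℕ) ≤ (j : ℕ)))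
      (fun k : ℕ => (⟨min k (j : ℕ), lt_of_le_of_lt (min_le_right _ _) j.2⟩ : Fin D))
      (fun a ha => by
        simp only [Finset.mem_coe, Finset.mem_filter, Finset.mem_univ, true_and]
        exact min_le_right _ _)
      (fun a ha b hb hab => by
        simp only [Finset.coe_range, Set.mem_Iio, Nat.lt_succ_iff] at ha hb
        have := congrArg Fin.val hab
        simpa [min_eq_left ha, min_eq_left hb] using this)
    simpa using this
  have := le_trans h2 (le_trans h1 (svd_card_support_le_rank s))
  omega

lemma svd_sub_trunc_rank_le {D : ℕ} {W : Matrix (Fin D) (Fin D) ℝ} (s : SVD W) (R : ℕ)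
    (h : W.rank ≤ 2 * R) : (W - s.trunc R).rank ≤ R := by
  have hfac : W - s.trunc R =
      s.U * Matrix.diagonal (fun i : Fin D => if (i : ℕ) < R then 0 else s.σ i) * s.Vᵀ := by
    calc W - s.trunc R
        = s.U * Matrix.diagonal (fun i : Fin D => s.σ i) * s.Vᵀ - s.trunc R := by
          rw [← s.decomp]
      _ = s.U * Matrix.diagonal (fun i : Fin D => s.σ i) * s.Vᵀ -
            s.U * Matrix.diagonal (fun i : Fin D => if (i : ℕ) < R then s.σ i else 0) * s.Vᵀ := rfl
      _ = s.U * Matrix.diagonal (fun i : Fin D => if (i : ℕ) < R then 0 else s.σ i) * s.Vᵀ := by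
          rw [← Matrix.sub_mul, ← Matrix.mul_sub, Matrix.diagonal_sub]
          have hfun : (fun i : Fin D => s.σ i - if (i : ℕ) < R then s.σ i else 0)
              = fun i : Fin D => if (i : ℕ) < R then 0 else s.σ i := by
            funext i
            by_cases hi : (i : ℕ) < R <;> simp [hi]
          rw [hfun]
  rw [hfac]
  refine le_trans (Matrix.rank_mul_le_left _ _) ?_
  refine le_trans (Matrix.rank_mul_le_right _ _) ?_
  rw [Matrix.rank_diagonal, Fintype.card_subtype]
  have := Finset.card_le_card_of_injOn
    (s := Finset.univ.filter (fun i : Fin D => (if (i : ℕ) < R then (0:ℝ) else s.σ i) ≠ 0))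
    (t := Finset.range R)
    (fun i : Fin D => (i : ℕ) - R)
    (fun a ha => by
      simp only [Finset.mem_coe, Finset.mem_filter, Finset.mem_univ, true_and] at ha
      have haR : ¬ ((a : ℕ) < R) := fun hc => ha (if_pos hc)
      have hne : s.σ (a : ℕ) ≠ 0 := fun hc => ha (by rw [if_neg haR]; exact hc)
      have := svd_lt_rank_of_ne_zero s a hne
      simp only [Finset.mem_coe, Finset.mem_range]
      omega)
    (fun a ha b hb hab => by
      simp only [Finset.coe_filter, Set.mem_setOf_eq, Finset.mem_univ, true_and] at ha hb
      have haR : ¬ ((a : ℕ) < R) := fun hc => ha (if_pos hc)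
      have hbR : ¬ ((b : ℕ) < R) := fun hc => hb (if_pos hc)
      have hab2 : (a : ℕ) - R = (b : ℕ) - R := hab
      have : (a : ℕ) = (b : ℕ) := by omega
      exact Fin.ext this)
  simpa using this

/-- Split a rank-`≤ 2R` perturbation of a product `P * Q` into two rank-`≤ R`
adapters. -/
lemma factor_exists {D : ℕ} (P Q E : Matrix (Fin D) (Fin D) ℝ) (s : SVD E) (R : ℕ)
    (hE : E.rank ≤ 2 * R)
    (hQ : IsUnit Q.det)
    (hPQ : IsUnit (P * Q + s.trunc R).det) :
    ∃ dP dQ : Matrix (Fin D) (Fin D) ℝ,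
      dP.rank ≤ R ∧ dQ.rank ≤ R ∧ IsUnit (P + dP).det ∧
        (P + dP) * (Q + dQ) = P * Q + E := by
  set E1 := s.trunc R with hE1
  have hPdP : P + E1 * Q⁻¹ = (P * Q + E1) * Q⁻¹ := by
    rw [Matrix.add_mul, Matrix.mul_nonsing_inv_cancel_right Q P hQ]
  have hunit : IsUnit (P + E1 * Q⁻¹).det := by
    rw [hPdP, Matrix.det_mul]
    exact hPQ.mul (Matrix.isUnit_nonsing_inv_det _ hQ)
  refine ⟨E1 * Q⁻¹, (P + E1 * Q⁻¹)⁻¹ * (E - E1), ?_, ?_, hunit, ?_⟩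
  · exact le_trans (Matrix.rank_mul_le_left _ _) (svd_trunc_rank_le s R)
  · exact le_trans (Matrix.rank_mul_le_right _ _) (svd_sub_trunc_rank_le s R hE)
  · rw [Matrix.mul_add, Matrix.mul_nonsing_inv_cancel_left (P + E1 * Q⁻¹) (E - E1) hunit, Matrix.add_mul,
      Matrix.mul_assoc, Matrix.nonsing_inv_mul _ hQ, Matrix.mul_one]
    abel


lemma mul_biasMat {D N : ℕ} (T : Matrix (Fin D) (Fin D) ℝ) (b : Fin D → ℝ) :
    T * biasMat N b = biasMat N (T.mulVec b) := by
  ext i j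
  simp [biasMat, Matrix.mul_apply, Matrix.mulVec, dotProduct]

lemma blocks_eq_aux {D L : ℕ} (q pb : TFN1Params D) (T : ℕ → Matrix (Fin D) (Fin D) ℝ)
    (hT0 : T 0 = 1)
    (hA : ∀ m, 1 ≤ m → m ≤ L →
      (T (m - 1))ᵀ * ((q.WK m)ᵀ * q.WQ m) * T (m - 1) = (pb.WK m)ᵀ * pb.WQ m)
    (hB : ∀ m, 1 ≤ m → m ≤ L → q.W1 m * q.WV m * T (m - 1) = pb.W1 m * pb.WV m)
    (hC : ∀ m, 1 ≤ m → m ≤ L → q.W2 m = T m * pb.W2 m)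
    (hb1 : ∀ m, q.b1 m = pb.b1 m)
    (hb2 : ∀ m, q.b2 m = (T m).mulVec (pb.b2 m)) :
    ∀ (N : ℕ) (X : Matrix (Fin D) (Fin N) ℝ) (l : ℕ), l ≤ L →
      q.blocks l X = T l * pb.blocks l X := by
  intro N X l
  induction l with
  | zero => intro _; simp [TFN1Params.blocks, hT0]
  | succ l ih =>
    intro hl
    have hl' : l ≤ L := Nat.le_of_succ_le hl
    have h1m : 1 ≤ l + 1 := Nat.succ_le_succ (Nat.zero_le l)
    have hstep : q.blocks (l + 1) X = q.block (l + 1) (q.blocks l X) := rfl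
    have hstep' : pb.blocks (l + 1) X = pb.block (l + 1) (pb.blocks l X) := rfl
    rw [hstep, hstep', ih hl']
    set Z := pb.blocks l X with hZ
    have hAm := hA (l + 1) h1m hl
    have hBm := hB (l + 1) h1m hl
    simp only [Nat.add_sub_cancel] at hAm hBm
    have h1 : (q.WK (l+1) * (T l * Z))ᵀ * (q.WQ (l+1) * (T l * Z)) =
        (pb.WK (l+1) * Z)ᵀ * (pb.WQ (l+1) * Z) := by
      calc (q.WK (l+1) * (T l * Z))ᵀ * (q.WQ (l+1) * (T l * Z))
          = Zᵀ * ((T l)ᵀ * ((q.WK (l+1))ᵀ * q.WQ (l+1)) * T l) * Z := by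
            simp only [Matrix.transpose_mul, Matrix.mul_assoc]
        _ = Zᵀ * ((pb.WK (l+1))ᵀ * pb.WQ (l+1)) * Z := by rw [hAm]
        _ = (pb.WK (l+1) * Z)ᵀ * (pb.WQ (l+1) * Z) := by
            simp only [Matrix.transpose_mul, Matrix.mul_assoc]
    have h2 : q.W1 (l+1) * q.attn (l+1) (T l * Z) = pb.W1 (l+1) * pb.attn (l+1) Z := by
      unfold TFN1Params.attn
      rw [h1]
      calc q.W1 (l+1) * (q.WV (l+1) * (T l * Z) *
              colSoftmax ((pb.WK (l+1) * Z)ᵀ * (pb.WQ (l+1) * Z)))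
          = q.W1 (l+1) * q.WV (l+1) * T l * Z *
              colSoftmax ((pb.WK (l+1) * Z)ᵀ * (pb.WQ (l+1) * Z)) := by
            simp only [Matrix.mul_assoc]
        _ = pb.W1 (l+1) * pb.WV (l+1) * Z *
              colSoftmax ((pb.WK (l+1) * Z)ᵀ * (pb.WQ (l+1) * Z)) := by rw [hBm]
        _ = pb.W1 (l+1) * (pb.WV (l+1) * Z *
              colSoftmax ((pb.WK (l+1) * Z)ᵀ * (pb.WQ (l+1) * Z))) := by
            simp only [Matrix.mul_assoc]
    show q.block (l+1) (T l * Z) = T (l+1) * pb.block (l+1) Z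
    unfold TFN1Params.block
    have h3 : q.W1 (l+1) * q.attn (l+1) (T l * Z) + biasMat N (q.b1 (l+1)) =
        pb.W1 (l+1) * pb.attn (l+1) Z + biasMat N (pb.b1 (l+1)) := by
      rw [h2, hb1]
    rw [h3, hb2, hC (l+1) h1m hl, Matrix.mul_add, mul_biasMat, Matrix.mul_assoc]


/-- **Exact adaptation of single-head Transformer networks via LoRA
(Theorem 6).**  Under the single-head non-singularity assumption, if
`R ≥ max_{i∈{1,…,L+1}} ⌈G_i/2⌉` then there are rank-`≤ R` adapters for
`W_K, W_Q, W_V, W_1` in every block, for `W_{2L}` and for `W_o` (all other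
adapters zero), and updated biases, such that the adapted model equals the
target model on every input `X ∈ ℝ^{D×N}` for every sequence length `N ≥ 1`. -/
theorem lora_tfn_singlehead_exact (D L : ℕ)
    (hD : 1 ≤ D) (hL : 1 ≤ L)
    (pb p : TFN1Params D)
    (R : ℕ) (hR1 : 1 ≤ R) (hRD : R ≤ D)
    (hNSb : AllWeightsNS1 L pb) (hNSf : AllWeightsNS1 L p)
    (sKQ : ∀ l, SVD (EKQ1 pb p l))
    (sV : ∀ l, SVD (EV1 pb p l))
    (sO : SVD (EO1 pb p L))
    (hKQ : ∀ l ∈ Finset.Icc 1 L, ∀ r ∈ Finset.Icc 1 R,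
      ((p.WK l)ᵀ * p.WQ l + (sKQ l).trunc r).det ≠ 0)
    (hV : ∀ l ∈ Finset.Icc 1 L, ∀ r ∈ Finset.Icc 1 R,
      (p.W1 l * p.WV l + (sV l).trunc r).det ≠ 0)
    (hO : ∀ r ∈ Finset.Icc 1 R, (p.Wo * p.W2 L + sO.trunc r).det ≠ 0)
    (hR : ∀ i ∈ Finset.Icc 1 (L + 1), (Gap1 L pb p i + 1) / 2 ≤ R) :
    ∃ (dWK dWQ dWV dW1 : ℕ → Matrix (Fin D) (Fin D) ℝ)
      (dW2L dWo : Matrix (Fin D) (Fin D) ℝ)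
      (b1h b2h : ℕ → Fin D → ℝ),
      (∀ l ∈ Finset.Icc 1 L,
        (dWK l).rank ≤ R ∧ (dWQ l).rank ≤ R ∧ (dWV l).rank ≤ R ∧
          (dW1 l).rank ≤ R) ∧
      dW2L.rank ≤ R ∧ dWo.rank ≤ R ∧
      ∀ N : ℕ, 1 ≤ N → ∀ X : Matrix (Fin D) (Fin N) ℝ,
        TFN1Params.forward
          { WV := fun l => p.WV l + dWV l
            WK := fun l => p.WK l + dWK l
            WQ := fun l => p.WQ l + dWQ l
            W1 := fun l => p.W1 l + dW1 l
            W2 := fun l => if l = L then p.W2 L + dW2L else p.W2 l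
            b1 := b1h
            b2 := b2h
            Wo := p.Wo + dWo } L X = pb.forward L X := by
  classical
  have hRmem : R ∈ Finset.Icc 1 R := Finset.mem_Icc.mpr ⟨hR1, le_rfl⟩
  have hmem : ∀ m, 1 ≤ m → m ≤ L → m ∈ Finset.Icc 1 L :=
    fun m a b => Finset.mem_Icc.mpr ⟨a, b⟩
  have hu2f : ∀ l ∈ Finset.Icc 1 L, IsUnit (p.W2 l).det := fun l hl =>
    isUnit_iff_ne_zero.mpr (hNSf.1 l hl).2.2.2.2
  have hu2b : ∀ l ∈ Finset.Icc 1 L, IsUnit (pb.W2 l).det := fun l hl =>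
    isUnit_iff_ne_zero.mpr (hNSb.1 l hl).2.2.2.2
  have huQf : ∀ l ∈ Finset.Icc 1 L, IsUnit (p.WQ l).det := fun l hl =>
    isUnit_iff_ne_zero.mpr (hNSf.1 l hl).2.2.1
  have huVf : ∀ l ∈ Finset.Icc 1 L, IsUnit (p.WV l).det := fun l hl =>
    isUnit_iff_ne_zero.mpr (hNSf.1 l hl).1
  have hadd : ∀ A B : Matrix (Fin D) (Fin D) ℝ, A + (B - A) = B := fun A B => by abel
  have hgap : ∀ i ∈ Finset.Icc 1 (L + 1), Gap1 L pb p i ≤ 2 * R := by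
    intro i hi
    have := hR i hi
    omega
  have hEOrank : (EO1 pb p L).rank ≤ 2 * R := by
    have := hgap (L + 1) (Finset.mem_Icc.mpr ⟨by omega, le_rfl⟩)
    simpa [Gap1, EO1] using this
  have hEKQrank : ∀ l ∈ Finset.Icc 1 L, (EKQ1 pb p l).rank ≤ 2 * R := by
    intro l hl
    obtain ⟨hl1, hlL⟩ := Finset.mem_Icc.mp hl
    by_cases h1 : l = 1
    · subst h1
      have := hgap 1 (Finset.mem_Icc.mpr ⟨le_rfl, by omega⟩)
      have hne : (1 : ℕ) ≠ L + 1 := by omega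
      simp only [Gap1, if_neg hne, if_pos rfl] at this
      rw [EKQ1, if_pos rfl]
      exact le_trans (le_max_left _ _) this
    · have hneL1 : l ≠ L + 1 := by omega
      have hmem' : l - 1 ∈ Finset.Icc 1 L := hmem _ (by omega) (by omega)
      have huf := hu2f (l - 1) hmem'
      have hufT : IsUnit ((p.W2 (l - 1))ᵀ).det := by rwa [Matrix.det_transpose]
      have hEKQ : EKQ1 pb p l =
          ((p.W2 (l - 1))ᵀ)⁻¹ *
            ((pb.W2 (l - 1))ᵀ * (pb.WK l)ᵀ * pb.WQ l * pb.W2 (l - 1) -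
              (p.W2 (l - 1))ᵀ * (p.WK l)ᵀ * p.WQ l * p.W2 (l - 1)) *
            (p.W2 (l - 1))⁻¹ := by
        rw [EKQ1, if_neg h1, Matrix.mul_sub, Matrix.sub_mul]
        congr 1
        · simp only [Matrix.mul_assoc]
        · rw [show (p.W2 (l - 1))ᵀ * (p.WK l)ᵀ * p.WQ l * p.W2 (l - 1) =
              (p.W2 (l - 1))ᵀ * (((p.WK l)ᵀ * p.WQ l) * p.W2 (l - 1)) by
              simp only [Matrix.mul_assoc]]
          rw [Matrix.nonsing_inv_mul_cancel_left _ _ hufT,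
            Matrix.mul_nonsing_inv_cancel_right _ _ huf]
      have := hgap l (Finset.mem_Icc.mpr ⟨by omega, by omega⟩)
      simp only [Gap1, if_neg hneL1, if_neg h1] at this
      refine le_trans ?_ (le_trans (le_max_left _ _) this)
      rw [hEKQ]
      exact le_trans (Matrix.rank_mul_le_left _ _) (Matrix.rank_mul_le_right _ _)
  have hEVrank : ∀ l ∈ Finset.Icc 1 L, (EV1 pb p l).rank ≤ 2 * R := by
    intro l hl
    obtain ⟨hl1, hlL⟩ := Finset.mem_Icc.mp hl
    by_cases h1 : l = 1
    · subst h1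
      have := hgap 1 (Finset.mem_Icc.mpr ⟨le_rfl, by omega⟩)
      have hne : (1 : ℕ) ≠ L + 1 := by omega
      simp only [Gap1, if_neg hne, if_pos rfl] at this
      rw [EV1, if_pos rfl]
      exact le_trans (le_max_right _ _) this
    · have hneL1 : l ≠ L + 1 := by omega
      have hmem' : l - 1 ∈ Finset.Icc 1 L := hmem _ (by omega) (by omega)
      have huf := hu2f (l - 1) hmem'
      have hEV : EV1 pb p l =
          (pb.W1 l * pb.WV l * pb.W2 (l - 1) - p.W1 l * p.WV l * p.W2 (l - 1)) *
            (p.W2 (l - 1))⁻¹ := by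
        rw [EV1, if_neg h1, Matrix.sub_mul, Matrix.mul_nonsing_inv_cancel_right _ _ huf]
      have := hgap l (Finset.mem_Icc.mpr ⟨by omega, by omega⟩)
      simp only [Gap1, if_neg hneL1, if_neg h1] at this
      refine le_trans ?_ (le_trans (le_max_right _ _) this)
      rw [hEV]
      exact Matrix.rank_mul_le_left _ _
  -- choose KQ adapters
  have hKQch : ∀ l, ∃ dK dQ : Matrix (Fin D) (Fin D) ℝ, dK.rank ≤ R ∧ dQ.rank ≤ R ∧
      (l ∈ Finset.Icc 1 L →
        (p.WK l + dK)ᵀ * (p.WQ l + dQ) = (p.WK l)ᵀ * p.WQ l + EKQ1 pb p l) := by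
    intro l
    by_cases hl : l ∈ Finset.Icc 1 L
    · obtain ⟨dP, dQ, hr1, hr2, _, heq⟩ :=
        factor_exists ((p.WK l)ᵀ) (p.WQ l) (EKQ1 pb p l) (sKQ l) R (hEKQrank l hl)
          (huQf l hl) (isUnit_iff_ne_zero.mpr (hKQ l hl R hRmem))
      refine ⟨dPᵀ, dQ, by rwa [Matrix.rank_transpose], hr2, fun _ => ?_⟩
      rw [Matrix.transpose_add, Matrix.transpose_transpose]
      exact heq
    · exact ⟨0, 0, by simp [Matrix.rank_zero], by simp [Matrix.rank_zero],
        fun h => absurd h hl⟩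
  choose dWK dWQ hrKdW hrQdW hKQeq using hKQch
  -- choose V adapters
  have hVch : ∀ l, ∃ d1 dV : Matrix (Fin D) (Fin D) ℝ, d1.rank ≤ R ∧ dV.rank ≤ R ∧
      (l ∈ Finset.Icc 1 L →
        (p.W1 l + d1) * (p.WV l + dV) = p.W1 l * p.WV l + EV1 pb p l) := by
    intro l
    by_cases hl : l ∈ Finset.Icc 1 L
    · obtain ⟨d1, dV, hr1, hr2, _, heq⟩ :=
        factor_exists (p.W1 l) (p.WV l) (EV1 pb p l) (sV l) R (hEVrank l hl)
          (huVf l hl) (isUnit_iff_ne_zero.mpr (hV l hl R hRmem))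
      exact ⟨d1, dV, hr1, hr2, fun _ => heq⟩
    · exact ⟨0, 0, by simp [Matrix.rank_zero], by simp [Matrix.rank_zero],
        fun h => absurd h hl⟩
  choose dW1 dWV hr1dW hrVdW hVeq using hVch
  -- choose output adapters
  obtain ⟨dWo, dW2L, hrO, hr2L, hOunit, hOeq⟩ :=
    factor_exists p.Wo (p.W2 L) (EO1 pb p L) sO R hEOrank
      (hu2f L (hmem L hL le_rfl)) (isUnit_iff_ne_zero.mpr (hO R hRmem))
  have hOeq' : (p.Wo + dWo) * (p.W2 L + dW2L) = pb.Wo * pb.W2 L := by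
    rw [hOeq, EO1]
    abel
  have hL0 : L ≠ 0 := by omega
  set T : ℕ → Matrix (Fin D) (Fin D) ℝ := fun l =>
    if l = 0 then 1 else if l = L then (p.Wo + dWo)⁻¹ * pb.Wo
    else p.W2 l * (pb.W2 l)⁻¹ with hTdef
  have hT0 : T 0 = 1 := by simp [hTdef]
  have hTL : T L = (p.Wo + dWo)⁻¹ * pb.Wo := by simp [hTdef, hL0]
  have main : ∀ q : TFN1Params D,
      q.WV = (fun l => p.WV l + dWV l) →
      q.WK = (fun l => p.WK l + dWK l) →
      q.WQ = (fun l => p.WQ l + dWQ l) →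
      q.W1 = (fun l => p.W1 l + dW1 l) →
      q.W2 = (fun l => if l = L then p.W2 L + dW2L else p.W2 l) →
      q.b1 = pb.b1 →
      q.b2 = (fun l => (T l).mulVec (pb.b2 l)) →
      q.Wo = p.Wo + dWo →
      ∀ (N : ℕ) (X : Matrix (Fin D) (Fin N) ℝ), q.forward L X = pb.forward L X := by
    intro q hWV hWK hWQ hW1 hW2 hb1q hb2q hWo N X
    have hA : ∀ m, 1 ≤ m → m ≤ L →
        (T (m - 1))ᵀ * ((q.WK m)ᵀ * q.WQ m) * T (m - 1) = (pb.WK m)ᵀ * pb.WQ m := by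
      intro m h1m hmL
      simp only [hWK, hWQ]
      rw [hKQeq m (hmem m h1m hmL)]
      by_cases hm1 : m = 1
      · subst hm1
        rw [EKQ1, if_pos rfl, hadd]
        simp [hT0]
      · have hm0 : m - 1 ≠ 0 := by omega
        have hmLne : m - 1 ≠ L := by omega
        have hmem' : m - 1 ∈ Finset.Icc 1 L := hmem _ (by omega) (by omega)
        have huf := hu2f (m - 1) hmem'
        have hub := hu2b (m - 1) hmem'
        have hufT : IsUnit ((p.W2 (m - 1))ᵀ).det := by rwa [Matrix.det_transpose]
        have hubT : IsUnit ((pb.W2 (m - 1))ᵀ).det := by rwa [Matrix.det_transpose]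
        have hTm : T (m - 1) = p.W2 (m - 1) * (pb.W2 (m - 1))⁻¹ := by
          simp [hTdef, hm0, hmLne]
        rw [hTm, EKQ1, if_neg hm1, hadd]
        simp only [Matrix.transpose_mul, Matrix.transpose_nonsing_inv, Matrix.mul_assoc]
        rw [Matrix.nonsing_inv_mul_cancel_left _ _ huf, Matrix.mul_nonsing_inv _ hub,
          Matrix.mul_one, Matrix.mul_nonsing_inv_cancel_left _ _ hufT,
          Matrix.nonsing_inv_mul_cancel_left _ _ hubT]
    have hB : ∀ m, 1 ≤ m → m ≤ L →
        q.W1 m * q.WV m * T (m - 1) = pb.W1 m * pb.WV m := by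
      intro m h1m hmL
      simp only [hW1, hWV]
      rw [hVeq m (hmem m h1m hmL)]
      by_cases hm1 : m = 1
      · subst hm1
        rw [EV1, if_pos rfl, hadd]
        simp [hT0]
      · have hm0 : m - 1 ≠ 0 := by omega
        have hmLne : m - 1 ≠ L := by omega
        have hmem' : m - 1 ∈ Finset.Icc 1 L := hmem _ (by omega) (by omega)
        have huf := hu2f (m - 1) hmem'
        have hub := hu2b (m - 1) hmem'
        have hTm : T (m - 1) = p.W2 (m - 1) * (pb.W2 (m - 1))⁻¹ := by
          simp [hTdef, hm0, hmLne]
        rw [hTm, EV1, if_neg hm1, hadd]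
        simp only [Matrix.mul_assoc]
        rw [Matrix.nonsing_inv_mul_cancel_left _ _ huf, Matrix.mul_nonsing_inv _ hub,
          Matrix.mul_one]
    have hC : ∀ m, 1 ≤ m → m ≤ L → q.W2 m = T m * pb.W2 m := by
      intro m h1m hmL
      simp only [hW2]
      by_cases hmL' : m = L
      · subst hmL'
        rw [if_pos rfl, hTL, Matrix.mul_assoc, ← hOeq',
          Matrix.nonsing_inv_mul_cancel_left _ _ hOunit]
      · have hm0 : m ≠ 0 := by omega
        have hmem' : m ∈ Finset.Icc 1 L := hmem m h1m hmL
        have hub := hu2b m hmem'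
        have hTm : T m = p.W2 m * (pb.W2 m)⁻¹ := by simp [hTdef, hm0, hmL']
        rw [if_neg hmL', hTm, Matrix.nonsing_inv_mul_cancel_right _ _ hub]
    have hkey := blocks_eq_aux q pb T hT0 hA hB hC (fun m => by rw [hb1q])
      (fun m => by rw [hb2q]) N X L le_rfl
    simp only [TFN1Params.forward]
    rw [hkey, hWo, hTL]
    congr 1
    simp only [← Matrix.mul_assoc]
    rw [Matrix.mul_nonsing_inv _ hOunit, Matrix.one_mul]
  refine ⟨dWK, dWQ, dWV, dW1, dW2L, dWo, pb.b1, fun l => (T l).mulVec (pb.b2 l),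
    fun l hl => ⟨hrKdW l, hrQdW l, hrVdW l, hr1dW l⟩, hr2L, hrO, ?_⟩
  intro N hN X
  exact main
    { WV := fun l => p.WV l + dWV l
      WK := fun l => p.WK l + dWK l
      WQ := fun l => p.WQ l + dWQ l
      W1 := fun l => p.W1 l + dW1 l
      W2 := fun l => if l = L then p.W2 L + dW2L else p.W2 l
      b1 := pb.b1
      b2 := fun l => (T l).mulVec (pb.b2 l)
      Wo := p.Wo + dWo } rfl rfl rfl rfl rfl rfl rfl rfl N X

end
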